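/- arXiv:1203.4610 — 2 statements merged into one kernel-verified Lean document; each statement's English description precedes it below -/
import Mathlib

section
/- For an acceptance set A and traded asset S, the risk measure ρ_{A,S} is lower semicontinuous at a point x if and only if x + (m/S_0) S_T ∉ Closure(A) for every real m < ρ_{A,S}(x), which is also equivalent to ρ_{Closure(A),S}(x) = ρ_{A,S}(x). -/
open BoundedContinuousFunction MeasureTheory Pointwise

variable {Ω : Type*} [TopologicalSpace Ω] [DiscreteTopology Ω] [Nonempty Ω]

/-- `X` is modeled as the Banach lattice `Ω →ᵇ ℝ` of bounded functions with sup norm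
(the discrete topology makes every function continuous) and pointwise order.
An acceptance set is a nonempty proper monotone subset of `X`. -/
def IsAcceptanceSet (A : Set (Ω →ᵇ ℝ)) : Prop :=
  A.Nonempty ∧ A ≠ Set.univ ∧ ∀ x ∈ A, ∀ y, x ≤ y → y ∈ A

/-- the risk measure `ρ_{A,S}` w.r.t. the acceptance set `A` and the traded asset
`S = (S0, ST)`, with values in the extended reals -/
noncomputable def riskMeasure (A : Set (Ω →ᵇ ℝ)) (S0 : ℝ) (ST : Ω →ᵇ ℝ) (x : Ω →ᵇ ℝ) : EReal :=
  sInf ((fun m : ℝ => (m : EReal)) '' {m : ℝ | x + (m / S0) • ST ∈ A})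

/-!
Lower semicontinuity of `ρ_{A,S}` at `x` is decided by the points `x + (m / S0) • ST` with
`m < ρ_{A,S}(x)`. If such a point lies in `closure A`, it is a limit of `a ∈ A`, and the
perturbations `a - (m / S0) • ST → x` have risk at most `m`, so `ρ_{A,S}` jumps down at `x`.
Conversely, if such a point lies outside the closed set `closure A`, the same holds for
`z + (m / S0) • ST` with `z` near `x`, and monotonicity of `A` in the cash direction gives
`ρ_{A,S}(z) ≥ m` there. The second equivalence is a reformulation: `ρ_{closure A,S}(x) ≥ ρ_{A,S}(x)`
says precisely that no `m < ρ_{A,S}(x)` is accepted by `closure A`.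
-/

open Topology

instance BoundedContinuousFunction.instSMulPosMono {α : Type*} [TopologicalSpace α] :
    SMulPosMono ℝ (α →ᵇ ℝ) where
  smul_le_smul_of_nonneg_right _ hf _ _ hab x :=
    mul_le_mul_of_nonneg_right hab (hf x)

section RiskMeasure

omit [DiscreteTopology Ω] [Nonempty Ω]

variable {A B : Set (Ω →ᵇ ℝ)} {S0 : ℝ} {ST x : Ω →ᵇ ℝ} {m : ℝ}

theorem IsAcceptanceSet.isUpperSet (hA : IsAcceptanceSet A) : IsUpperSet A :=
  fun _ _ hle hmem => hA.2.2 _ hmem _ hle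

theorem riskMeasure_le_of_mem (h : x + (m / S0) • ST ∈ A) : riskMeasure A S0 ST x ≤ m :=
  sInf_le ⟨m, h, rfl⟩

theorem riskMeasure_anti (hAB : A ⊆ B) : riskMeasure B S0 ST x ≤ riskMeasure A S0 ST x :=
  sInf_le_sInf (Set.image_mono fun _ hm => hAB hm)

theorem le_riskMeasure_iff :
    riskMeasure A S0 ST x ≤ riskMeasure B S0 ST x ↔
      ∀ m : ℝ, (m : EReal) < riskMeasure A S0 ST x → x + (m / S0) • ST ∉ B := by
  simp only [riskMeasure, le_sInf_iff, Set.forall_mem_image]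
  exact forall_congr' fun m => by rw [← not_le, not_imp_not]; rfl

theorem le_riskMeasure_of_notMem (hA : IsUpperSet A) (hS0 : 0 ≤ S0) (hST : 0 ≤ ST)
    (h : x + (m / S0) • ST ∉ A) : (m : EReal) ≤ riskMeasure A S0 ST x := by
  refine le_sInf ?_
  rintro _ ⟨m', hm', rfl⟩
  rw [EReal.coe_le_coe_iff]
  by_contra! hlt
  refine h (hA ?_ hm')
  gcongr

theorem notMem_closure_of_lowerSemicontinuousAt
    (hρ : LowerSemicontinuousAt (riskMeasure A S0 ST) x) (hm : (m : EReal) < riskMeasure A S0 ST x) :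
    x + (m / S0) • ST ∉ closure A := by
  intro hcl
  obtain ⟨m', hmm', hm'⟩ := EReal.exists_between_coe_real hm
  have hfreq : ∃ᶠ z in 𝓝 x, z + (m / S0) • ST ∈ A := by
    refine mem_closure_iff_frequently.mp (?_ : x ∈ closure ((· + (m / S0) • ST) ⁻¹' A))
    rwa [← Homeomorph.coe_addRight, ← Homeomorph.preimage_closure]
  obtain ⟨z, hz, hzA⟩ := ((hρ m' hm').and_frequently hfreq).exists
  exact hmm'.not_ge (hz.le.trans (riskMeasure_le_of_mem hzA))

theorem eventually_le_riskMeasure_of_notMem_closure (hA : IsUpperSet A) (hS0 : 0 ≤ S0)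
    (hST : 0 ≤ ST) (h : x + (m / S0) • ST ∉ closure A) :
    ∀ᶠ z in 𝓝 x, (m : EReal) ≤ riskMeasure A S0 ST z := by
  have hopen : IsOpen {z | z + (m / S0) • ST ∉ closure A} :=
    (isClosed_closure.preimage (continuous_add_const _)).isOpen_compl
  filter_upwards [hopen.mem_nhds h] with z hz
  exact le_riskMeasure_of_notMem hA hS0 hST fun hzA => hz (subset_closure hzA)

theorem lowerSemicontinuousAt_riskMeasure (hA : IsUpperSet A) (hS0 : 0 ≤ S0) (hST : 0 ≤ ST)
    (h : ∀ m : ℝ, (m : EReal) < riskMeasure A S0 ST x → x + (m / S0) • ST ∉ closure A) :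
    LowerSemicontinuousAt (riskMeasure A S0 ST) x := by
  intro c hc
  obtain ⟨m, hcm, hm⟩ := EReal.exists_between_coe_real hc
  filter_upwards [eventually_le_riskMeasure_of_notMem_closure hA hS0 hST (h m hm)] with z hz
  exact hcm.trans_le hz

end RiskMeasure

theorem riskMeasure_lowerSemicontinuousAt_iff_general
    (A : Set (Ω →ᵇ ℝ)) (hA : IsAcceptanceSet A) (S0 : ℝ) (hS0 : 0 < S0) (ST : Ω →ᵇ ℝ) (hST : 0 ≤ ST) (x : Ω →ᵇ ℝ) :
    (LowerSemicontinuousAt (riskMeasure A S0 ST) x ↔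
      ∀ m : ℝ, (m : EReal) < riskMeasure A S0 ST x → x + (m / S0) • ST ∉ closure A) ∧
    (LowerSemicontinuousAt (riskMeasure A S0 ST) x ↔
      riskMeasure (closure A) S0 ST x = riskMeasure A S0 ST x) := by
  have hlsc : LowerSemicontinuousAt (riskMeasure A S0 ST) x ↔
      ∀ m : ℝ, (m : EReal) < riskMeasure A S0 ST x → x + (m / S0) • ST ∉ closure A :=
    ⟨fun hρ _ => notMem_closure_of_lowerSemicontinuousAt hρ,
      lowerSemicontinuousAt_riskMeasure hA.isUpperSet hS0.le hST⟩
  refine ⟨hlsc, hlsc.trans ?_⟩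
  rw [← le_riskMeasure_iff]
  exact ⟨(riskMeasure_anti subset_closure).antisymm, ge_of_eq⟩

theorem riskMeasure_lowerSemicontinuousAt_iff
    (A : Set (Ω →ᵇ ℝ)) (hA : IsAcceptanceSet A) (S0 : ℝ) (hS0 : 0 < S0) (ST : Ω →ᵇ ℝ) (hST : 0 ≤ ST) (hST0 : ST ≠ 0) (x : Ω →ᵇ ℝ) :
    (LowerSemicontinuousAt (riskMeasure A S0 ST) x ↔
      ∀ m : ℝ, (m : EReal) < riskMeasure A S0 ST x → x + (m / S0) • ST ∉ closure A) ∧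
    (LowerSemicontinuousAt (riskMeasure A S0 ST) x ↔
      riskMeasure (closure A) S0 ST x = riskMeasure A S0 ST x) :=
  riskMeasure_lowerSemicontinuousAt_iff_general A hA S0 hS0 ST hST x
end

section
/- Let A be an acceptance set and S = (S_0, S_T), R = (R_0, R_T) two traded assets with S_0 = R_0, such that ρ_{A,S} and ρ_{A,R} are both lower semicontinuous. If ρ_{A,S}(x) ≤ ρ_{A,R}(x) for every x ∈ X, then ρ_{A,S} = ρ_{A,R}. (There is no strictly better eligible asset.) -/
open BoundedContinuousFunction MeasureTheory Pointwise

variable {Ω : Type*} [TopologicalSpace Ω] [DiscreteTopology Ω] [Nonempty Ω]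

/-!
Suppose `ρ_{A,S} ≤ ρ_{A,R}` and `x + (m/P) S_T ∈ A`; fix `c > m`. The position
`z = x + (c/P) R_T + (m/P) S_T` becomes acceptable after selling `c/P` units of `R`, so
`ρ_{A,S}(z) ≤ ρ_{A,R}(z) ≤ -c < -m`. By monotonicity of `A` and `S_T ≥ 0`, selling `m/P` units
of `S` from `z` is then acceptable too, i.e. `x + (c/P) R_T ∈ A`, whence `ρ_{A,R}(x) ≤ c`.
Letting `c ↓ m` and taking the infimum over `m` gives `ρ_{A,R}(x) ≤ ρ_{A,S}(x)`.
-/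

section

omit [DiscreteTopology Ω] [Nonempty Ω]

lemma riskMeasure_le_of_add_smul_mem {A : Set (Ω →ᵇ ℝ)} {S0 : ℝ} {ST x : Ω →ᵇ ℝ} {m : ℝ}
    (h : x + (m / S0) • ST ∈ A) : riskMeasure A S0 ST x ≤ m :=
  sInf_le ⟨m, h, rfl⟩

lemma add_smul_mem_of_riskMeasure_lt {A : Set (Ω →ᵇ ℝ)}
    (hmono : ∀ x ∈ A, ∀ y, x ≤ y → y ∈ A) {P : ℝ} (hP : 0 ≤ P) {ST : Ω →ᵇ ℝ} (hST : 0 ≤ ST)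
    {x : Ω →ᵇ ℝ} {d : ℝ} (h : riskMeasure A P ST x < d) : x + (d / P) • ST ∈ A := by
  obtain ⟨_, ⟨m, hm, rfl⟩, hmd⟩ := sInf_lt_iff.mp h
  have hdiv : m / P ≤ d / P := div_le_div_of_nonneg_right (EReal.coe_lt_coe_iff.mp hmd).le hP
  exact hmono _ hm _ fun ω => by simpa using mul_le_mul_of_nonneg_right hdiv (hST ω)

lemma add_smul_mem_of_riskMeasure_le_riskMeasure {A : Set (Ω →ᵇ ℝ)}
    (hmono : ∀ x ∈ A, ∀ y, x ≤ y → y ∈ A) {P : ℝ} (hP : 0 ≤ P) {ST RT : Ω →ᵇ ℝ}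
    (hST : 0 ≤ ST) (hle : ∀ x, riskMeasure A P ST x ≤ riskMeasure A P RT x)
    {x : Ω →ᵇ ℝ} {m c : ℝ} (hm : x + (m / P) • ST ∈ A) (hmc : m < c) :
    x + (c / P) • RT ∈ A := by
  set z := x + (c / P) • RT + (m / P) • ST
  have hzR : riskMeasure A P RT z ≤ (-c : ℝ) :=
    riskMeasure_le_of_add_smul_mem (by convert hm using 1; module)
  have hzS : riskMeasure A P ST z < (-m : ℝ) :=
    (hle z).trans_lt (hzR.trans_lt (EReal.coe_lt_coe_iff.mpr (neg_lt_neg hmc)))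
  convert add_smul_mem_of_riskMeasure_lt hmono hP hST hzS using 1
  module

end

theorem no_optimal_eligible_asset_general
    (A : Set (Ω →ᵇ ℝ)) (hA : IsAcceptanceSet A)
    (P : ℝ) (hP : 0 < P)
    (ST : Ω →ᵇ ℝ) (hST : 0 ≤ ST)
    (RT : Ω →ᵇ ℝ)
    (hle : ∀ x : Ω →ᵇ ℝ, riskMeasure A P ST x ≤ riskMeasure A P RT x) :
    riskMeasure A P ST = riskMeasure A P RT := by
  funext x
  refine le_antisymm (hle x) (le_sInf ?_)
  rintro _ ⟨m, hm, rfl⟩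
  refine EReal.le_of_forall_lt_iff_le.mp fun c hmc => riskMeasure_le_of_add_smul_mem ?_
  exact add_smul_mem_of_riskMeasure_le_riskMeasure hA.2.2 hP.le hST hle hm
    (EReal.coe_lt_coe_iff.mp hmc)

theorem no_optimal_eligible_asset
    (A : Set (Ω →ᵇ ℝ)) (hA : IsAcceptanceSet A)
    (P : ℝ) (hP : 0 < P)
    (ST : Ω →ᵇ ℝ) (hST : 0 ≤ ST) (hST0 : ST ≠ 0)
    (RT : Ω →ᵇ ℝ) (hRT : 0 ≤ RT) (hRT0 : RT ≠ 0)
    (hlscS : LowerSemicontinuous (riskMeasure A P ST))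
    (hlscR : LowerSemicontinuous (riskMeasure A P RT))
    (hle : ∀ x : Ω →ᵇ ℝ, riskMeasure A P ST x ≤ riskMeasure A P RT x) :
    riskMeasure A P ST = riskMeasure A P RT :=
  no_optimal_eligible_asset_general A hA P hP ST hST RT hle
end
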